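/- Let n ≥ 3 be an integer, let N be real with N_min(n) < N < n (where N_min(n) is the maximum of |U_{n-1}| over [-cos(π/n), cos(π/n)]), and let u₀ = arccos(x₀) where x₀ is the unique positive root of |U_{n-1}(x)| = N. Define g(u) = N²·sin²(u) - sin²(nu). Then for u ∈ [-π, π]: g(u) > 0 when u₀ < |u| < π - u₀; g(u) = 0 when u ∈ {0, ±π, ±u₀, ±(π - u₀)}; and g(u) < 0 when 0 < |u| < u₀ or π - u₀ < |u| < π. -/

import Mathlib

/-!
For `0 < θ < π` we have `sin (n θ) = U_{n-1}(cos θ) sin θ`, so on `(0, π)` the sign of `g` is that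
of `N - |U_{n-1}(cos θ)|`. On `[π/n, π - π/n]` the cosine stays in `[-cos (π/n), cos (π/n)]`, where
`|U_{n-1}| ≤ N_min < N`, so `g > 0` there; this also forces `cos (π/n) < x₀`, i.e. `u₀ < π/n`.
On `(0, π/n]` the ratio `sin (n θ) / sin θ` is strictly decreasing and equals `N` at `u₀`, so `g`
changes sign from negative to positive at `u₀`. Since `g` is even and invariant under
`u ↦ π - u`, this determines its sign on all of `[-π, π]`.
-/

open Polynomial Polynomial.Chebyshev Real Set

theorem sin_nat_mul_pi_sub_sq (n : ℕ) (θ : ℝ) : sin (n * (π - θ)) ^ 2 = sin (n * θ) ^ 2 := by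
  rw [mul_sub, sin_nat_mul_pi_sub, neg_sq, mul_pow, ← pow_mul, pow_mul', neg_one_sq, one_pow,
    one_mul]

theorem U_real_cos_mul_sin (n : ℕ) (θ : ℝ) :
    (U ℝ ((n : ℤ) - 1)).eval (cos θ) * sin θ = sin (n * θ) := by
  simp [U_real_cos]

section SinMulDivSin

variable {a : ℝ}

theorem hasDerivAt_sin_mul (a θ : ℝ) : HasDerivAt (fun θ ↦ sin (a * θ)) (cos (a * θ) * a) θ :=
  (hasDerivAt_sin _).comp θ (by simpa using (hasDerivAt_id θ).const_mul a)

theorem hasDerivAt_cos_mul (a θ : ℝ) : HasDerivAt (fun θ ↦ cos (a * θ)) (-sin (a * θ) * a) θ :=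
  (hasDerivAt_cos _).comp θ (by simpa using (hasDerivAt_id θ).const_mul a)

theorem hasDerivAt_sin_mul_mul_cos_sub (a θ : ℝ) :
    HasDerivAt (fun θ ↦ sin (a * θ) * cos θ - a * cos (a * θ) * sin θ)
      ((a ^ 2 - 1) * sin (a * θ) * sin θ) θ :=
  (((hasDerivAt_sin_mul a θ).mul (hasDerivAt_cos θ)).sub
    (((hasDerivAt_cos_mul a θ).const_mul a).mul (hasDerivAt_sin θ))).congr_deriv (by ring)

variable (ha : 1 < a)
include ha

theorem sin_mul_mul_cos_sub_pos {θ : ℝ} (hθ : θ ∈ Ioc 0 (π / a)) :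
    0 < sin (a * θ) * cos θ - a * cos (a * θ) * sin θ := by
  have ha₀ : 0 < a := one_pos.trans ha
  have hmono : StrictMonoOn (fun θ ↦ sin (a * θ) * cos θ - a * cos (a * θ) * sin θ)
      (Icc 0 (π / a)) := by
    refine strictMonoOn_of_deriv_pos (convex_Icc 0 (π / a))
      (fun x _ ↦ (hasDerivAt_sin_mul_mul_cos_sub a x).continuousAt.continuousWithinAt) ?_
    intro x hx
    rw [interior_Icc] at hx
    rw [(hasDerivAt_sin_mul_mul_cos_sub a x).deriv]
    have hax : a * x < π := by rw [← lt_div_iff₀' ha₀]; exact hx.2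
    have hsin : 0 < sin x := sin_pos_of_pos_of_lt_pi hx.1 (hx.2.trans (div_lt_self pi_pos ha))
    have hsin_a : 0 < sin (a * x) := sin_pos_of_pos_of_lt_pi (mul_pos ha₀ hx.1) hax
    have : 0 < a ^ 2 - 1 := by nlinarith
    positivity
  simpa using hmono ⟨le_rfl, by positivity⟩ (Ioc_subset_Icc_self hθ) hθ.1

theorem strictAntiOn_sin_mul_div_sin :
    StrictAntiOn (fun θ ↦ sin (a * θ) / sin θ) (Ioc 0 (π / a)) := by
  have hsin : ∀ θ ∈ Ioc 0 (π / a), 0 < sin θ := fun θ hθ ↦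
    sin_pos_of_pos_of_lt_pi hθ.1 (hθ.2.trans_lt (div_lt_self pi_pos ha))
  refine strictAntiOn_of_deriv_neg (convex_Ioc 0 (π / a))
    (ContinuousOn.div (by fun_prop) (by fun_prop) fun θ hθ ↦ (hsin θ hθ).ne') ?_
  intro x hx
  rw [interior_Ioc] at hx
  have hsin_x := hsin x (Ioo_subset_Ioc_self hx)
  rw [((hasDerivAt_sin_mul a x).fun_div (hasDerivAt_sin x) hsin_x.ne').deriv]
  have := sin_mul_mul_cos_sub_pos ha (Ioo_subset_Ioc_self hx)
  exact div_neg_of_neg_of_pos (by linarith) (pow_pos hsin_x 2)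

end SinMulDivSin

/-- The function `g` of the statement. -/
noncomputable def sinSqGap (n : ℕ) (N u : ℝ) : ℝ := N ^ 2 * sin u ^ 2 - sin (n * u) ^ 2

section sinSqGap

variable {n : ℕ} {N : ℝ}

theorem sinSqGap_neg (u : ℝ) : sinSqGap n N (-u) = sinSqGap n N u := by
  simp [sinSqGap]

theorem sinSqGap_abs (u : ℝ) : sinSqGap n N |u| = sinSqGap n N u := by
  rcases abs_choice u with h | h <;> rw [h]
  exact sinSqGap_neg u

theorem sinSqGap_pi_sub (u : ℝ) : sinSqGap n N (π - u) = sinSqGap n N u := by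
  rw [sinSqGap, sinSqGap, sin_pi_sub, sin_nat_mul_pi_sub_sq]

theorem sinSqGap_zero : sinSqGap n N 0 = 0 := by
  simp [sinSqGap]

theorem sinSqGap_pi : sinSqGap n N π = 0 := by
  rw [← sub_zero π, sinSqGap_pi_sub, sinSqGap_zero]

theorem sinSqGap_eq_zero_of_sin_nat_mul_eq {u : ℝ} (hu : sin (n * u) = N * sin u) :
    sinSqGap n N u = 0 := by
  rw [sinSqGap, hu]; ring

theorem sinSqGap_pos_of_abs_lt {u : ℝ} (hu : |sin (n * u)| < N * sin u) :
    0 < sinSqGap n N u := by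
  rw [sinSqGap, sub_pos, ← mul_pow]
  exact sq_lt_sq' (by linarith [neg_abs_le (sin (n * u))]) (lt_of_le_of_lt (le_abs_self _) hu)

theorem sinSqGap_neg_of_lt_abs {u : ℝ} (hu : |N * sin u| < sin (n * u)) :
    sinSqGap n N u < 0 := by
  rw [sinSqGap, sub_neg, ← mul_pow]
  exact sq_lt_sq' (by linarith [neg_abs_le (N * sin u)]) (lt_of_le_of_lt (le_abs_self _) hu)

variable {u₀ : ℝ} (hn : 1 < n) (hu₀ : u₀ ∈ Ioc 0 (π / n)) (hN : sin (n * u₀) = N * sin u₀)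
include hn hu₀ hN

theorem sinSqGap_pos_of_mem_Ioc {t : ℝ} (ht : t ∈ Ioc u₀ (π / n)) : 0 < sinSqGap n N t := by
  have hπn : π / n < π := div_lt_self pi_pos (Nat.one_lt_cast.2 hn)
  have hsin₀ : 0 < sin u₀ := sin_pos_of_pos_of_lt_pi hu₀.1 (hu₀.2.trans_lt hπn)
  have ht₀ : 0 < t := hu₀.1.trans ht.1
  have hsin : 0 < sin t := sin_pos_of_pos_of_lt_pi ht₀ (ht.2.trans_lt hπn)
  have hsin_n : 0 ≤ sin (n * t) := sin_nonneg_of_nonneg_of_le_pi (by positivity)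
    (by rw [← le_div_iff₀' (by positivity)]; exact ht.2)
  have hlt := strictAntiOn_sin_mul_div_sin (Nat.one_lt_cast.2 hn) hu₀ ⟨ht₀, ht.2⟩ ht.1
  simp only at hlt
  rw [hN, mul_div_cancel_right₀ _ hsin₀.ne', div_lt_iff₀ hsin] at hlt
  exact sinSqGap_pos_of_abs_lt (by rwa [abs_of_nonneg hsin_n])

theorem sinSqGap_neg_of_mem_Ioo {t : ℝ} (ht : t ∈ Ioo 0 u₀) : sinSqGap n N t < 0 := by
  have hπn : π / n < π := div_lt_self pi_pos (Nat.one_lt_cast.2 hn)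
  have hsin₀ : 0 < sin u₀ := sin_pos_of_pos_of_lt_pi hu₀.1 (hu₀.2.trans_lt hπn)
  have hsin : 0 < sin t := sin_pos_of_pos_of_lt_pi ht.1 (ht.2.trans_le hu₀.2 |>.trans hπn)
  have hN₀ : 0 ≤ N := by
    have : 0 ≤ sin (n * u₀) := sin_nonneg_of_nonneg_of_le_pi (mul_nonneg n.cast_nonneg hu₀.1.le)
      (by rw [← le_div_iff₀' (by positivity)]; exact hu₀.2)
    exact nonneg_of_mul_nonneg_left (hN ▸ this) hsin₀
  have hlt := strictAntiOn_sin_mul_div_sin (Nat.one_lt_cast.2 hn) ⟨ht.1, ht.2.le.trans hu₀.2⟩ hu₀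
    ht.2
  simp only at hlt
  rw [hN, mul_div_cancel_right₀ _ hsin₀.ne', lt_div_iff₀ hsin] at hlt
  exact sinSqGap_neg_of_lt_abs (by rwa [abs_of_nonneg (by positivity)])

theorem sinSqGap_pos_of_mem_Ioo (hmid : ∀ t ∈ Icc (π / n) (π - π / n), 0 < sinSqGap n N t)
    {t : ℝ} (ht : t ∈ Ioo u₀ (π - u₀)) : 0 < sinSqGap n N t := by
  rcases le_or_gt t (π / n) with h | h
  · exact sinSqGap_pos_of_mem_Ioc hn hu₀ hN ⟨ht.1, h⟩
  rcases le_or_gt t (π - π / n) with h' | h'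
  · exact hmid t ⟨h.le, h'⟩
  rw [← sinSqGap_pi_sub]
  exact sinSqGap_pos_of_mem_Ioc hn hu₀ hN ⟨by linarith [ht.2], by linarith⟩

theorem sinSqGap_neg_of_mem_Ioo_union {t : ℝ} (ht : t ∈ Ioo 0 u₀ ∪ Ioo (π - u₀) π) :
    sinSqGap n N t < 0 := by
  rcases ht with ht | ⟨h₁, h₂⟩
  · exact sinSqGap_neg_of_mem_Ioo hn hu₀ hN ht
  rw [← sinSqGap_pi_sub]
  exact sinSqGap_neg_of_mem_Ioo hn hu₀ hN ⟨by linarith, by linarith⟩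

end sinSqGap

section UpperBound

variable {n : ℕ} {M : ℝ}
  (hM : M ∈ upperBounds ((fun x : ℝ => |(U ℝ ((n : ℤ) - 1)).eval x|) ''
    Icc (-cos (π / n)) (cos (π / n))))
include hM

theorem abs_sin_nat_mul_le_of_mem_Icc {t : ℝ} (ht : t ∈ Icc (π / n) (π - π / n)) :
    |sin (n * t)| ≤ M * sin t := by
  have hπn : 0 ≤ π / n := by positivity
  have ht₀ : 0 ≤ t := hπn.trans ht.1
  have htπ : t ≤ π := ht.2.trans (sub_le_self _ hπn)
  have hsin : 0 ≤ sin t := sin_nonneg_of_nonneg_of_le_pi ht₀ htπ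
  have hcos : cos t ∈ Icc (-cos (π / n)) (cos (π / n)) := by
    refine ⟨?_, cos_le_cos_of_nonneg_of_le_pi (by positivity) htπ ht.1⟩
    rw [← cos_pi_sub]
    exact cos_le_cos_of_nonneg_of_le_pi ht₀ (by linarith [ht.1]) ht.2
  rw [← U_real_cos_mul_sin, abs_mul, abs_of_nonneg hsin]
  exact mul_le_mul_of_nonneg_right (hM ⟨cos t, hcos, rfl⟩) hsin

theorem sinSqGap_pos_of_mem_Icc (hn : 0 < n) {N t : ℝ} (hMN : M < N)
    (ht : t ∈ Icc (π / n) (π - π / n)) : 0 < sinSqGap n N t := by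
  have hπn : 0 < π / n := by positivity
  have hsin : 0 < sin t := sin_pos_of_pos_of_lt_pi (hπn.trans_le ht.1) (by linarith [ht.2])
  exact sinSqGap_pos_of_abs_lt
    ((abs_sin_nat_mul_le_of_mem_Icc hM ht).trans_lt (mul_lt_mul_of_pos_right hMN hsin))

theorem arccos_mem_Ioo_of_upperBounds (hn : 2 ≤ n) {N x : ℝ} (hMN : M < N) (hx : x ∈ Ioo 0 1)
    (hxN : |(U ℝ ((n : ℤ) - 1)).eval x| = N) :
    arccos x ∈ Ioo 0 (π / n) := by
  have hπn₀ : 0 ≤ π / n := by positivity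
  have hπn : π / n ≤ π / 2 := div_le_div_of_nonneg_left pi_pos.le two_pos (by exact_mod_cast hn)
  have hcos₀ : 0 ≤ cos (π / n) := cos_nonneg_of_mem_Icc ⟨by linarith [pi_pos], hπn⟩
  have hcos : cos (π / n) < x := by
    by_contra! h
    linarith [hM ⟨x, ⟨by linarith [hx.1], h⟩, rfl⟩]
  refine ⟨arccos_pos.2 hx.2, ?_⟩
  calc arccos x < arccos (cos (π / n)) :=
        strictAntiOn_arccos ⟨by linarith, cos_le_one _⟩ ⟨by linarith [hx.1], hx.2.le⟩ hcos
    _ = π / n := arccos_cos hπn₀ (by linarith [pi_pos])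

end UpperBound

theorem sin_nat_mul_eq_of_abs_U_eval_cos_eq {n : ℕ} (hn : 0 < n) {N u : ℝ}
    (hu : u ∈ Icc 0 (π / n)) (hN : |(U ℝ ((n : ℤ) - 1)).eval (cos u)| = N) :
    sin (n * u) = N * sin u := by
  have hnu : n * u ≤ π := by rw [← le_div_iff₀' (by positivity)]; exact hu.2
  have hsin : 0 ≤ sin u := sin_nonneg_of_nonneg_of_le_pi hu.1
    (hu.2.trans (div_le_self pi_pos.le (by exact_mod_cast hn)))
  rw [← abs_of_nonneg (sin_nonneg_of_nonneg_of_le_pi (mul_nonneg n.cast_nonneg hu.1) hnu),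
    ← U_real_cos_mul_sin, abs_mul, hN, abs_of_nonneg hsin]

theorem g_sign_of_N_lt_n_general (n : ℕ) (hn : 3 ≤ n) (Nmin N : ℝ)
    (hNmin : IsGreatest ((fun x : ℝ => |(U ℝ ((n : ℤ) - 1)).eval x|) ''
      Set.Icc (-(Real.cos (π / n))) (Real.cos (π / n))) Nmin)
    (hN₁ : Nmin < N)
    (x₀ : ℝ) (hx₀ : x₀ ∈ Set.Ioo (0 : ℝ) 1)
    (hx₀N : |(U ℝ ((n : ℤ) - 1)).eval x₀| = N)
    (u₀ : ℝ) (hu₀ : u₀ = Real.arccos x₀)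
    (g : ℝ → ℝ)
    (hg : ∀ u : ℝ, g u = N ^ 2 * Real.sin u ^ 2 - Real.sin (n * u) ^ 2) :
    (∀ u : ℝ, -π ≤ u → u ≤ π → u₀ < |u| → |u| < π - u₀ → 0 < g u) ∧
    (∀ u : ℝ, u ∈ ({0, π, -π, u₀, -u₀, π - u₀, -(π - u₀)} : Set ℝ) → g u = 0) ∧
    (∀ u : ℝ, -π ≤ u → u ≤ π →
      (0 < |u| ∧ |u| < u₀) ∨ (π - u₀ < |u| ∧ |u| < π) → g u < 0) := by
  obtain rfl : g = sinSqGap n N := funext hg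
  have hu₀_mem : u₀ ∈ Ioo 0 (π / n) :=
    hu₀ ▸ arccos_mem_Ioo_of_upperBounds hNmin.2 (by omega) hN₁ hx₀ hx₀N
  have hsin : sin (n * u₀) = N * sin u₀ := by
    refine sin_nat_mul_eq_of_abs_U_eval_cos_eq (by omega) (Ioo_subset_Icc_self hu₀_mem) ?_
    rwa [hu₀, cos_arccos (by linarith [hx₀.1]) hx₀.2.le]
  have hu₀' : u₀ ∈ Ioc 0 (π / n) := Ioo_subset_Ioc_self hu₀_mem
  refine ⟨fun u _ _ h₁ h₂ ↦ ?_, fun u hu ↦ ?_, fun u _ _ hu ↦ ?_⟩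
  · rw [← sinSqGap_abs]
    exact sinSqGap_pos_of_mem_Ioo (by omega) hu₀' hsin
      (fun t ↦ sinSqGap_pos_of_mem_Icc hNmin.2 (by omega) hN₁) ⟨h₁, h₂⟩
  · rcases hu with rfl | rfl | rfl | rfl | rfl | rfl | rfl <;>
      simp only [sinSqGap_neg, sinSqGap_pi_sub, sinSqGap_zero, sinSqGap_pi,
        sinSqGap_eq_zero_of_sin_nat_mul_eq hsin]
  · rw [← sinSqGap_abs]
    exact sinSqGap_neg_of_mem_Ioo_union (by omega) hu₀' hsin hu

theorem g_sign_of_N_lt_n (n : ℕ) (hn : 3 ≤ n) (Nmin N : ℝ)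
    (hNmin : IsGreatest ((fun x : ℝ => |(U ℝ ((n : ℤ) - 1)).eval x|) ''
      Set.Icc (-(Real.cos (π / n))) (Real.cos (π / n))) Nmin)
    (hN₁ : Nmin < N) (hN₂ : N < n)
    (x₀ : ℝ) (hx₀ : x₀ ∈ Set.Ioo (0 : ℝ) 1)
    (hx₀N : |(U ℝ ((n : ℤ) - 1)).eval x₀| = N)
    (u₀ : ℝ) (hu₀ : u₀ = Real.arccos x₀)
    (g : ℝ → ℝ)
    (hg : ∀ u : ℝ, g u = N ^ 2 * Real.sin u ^ 2 - Real.sin (n * u) ^ 2) :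
    (∀ u : ℝ, -π ≤ u → u ≤ π → u₀ < |u| → |u| < π - u₀ → 0 < g u) ∧
    (∀ u : ℝ, u ∈ ({0, π, -π, u₀, -u₀, π - u₀, -(π - u₀)} : Set ℝ) → g u = 0) ∧
    (∀ u : ℝ, -π ≤ u → u ≤ π →
      (0 < |u| ∧ |u| < u₀) ∨ (π - u₀ < |u| ∧ |u| < π) → g u < 0) :=
  g_sign_of_N_lt_n_general n hn Nmin N hNmin hN₁ x₀ hx₀ hx₀N u₀ hu₀ g hg
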